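/- Let n ≥ 3 with n ≡ −1 (mod 4) and let G = Z/nZ. Let S1 = S2 = 0^{(n−1)/2}·1^{(n−1)/2}·((n+1)/2) (the sequence consisting of (n−1)/2 copies of 0, (n−1)/2 copies of 1, and one copy of (n+1)/2 in G). Then σ(S1) = σ(S2) = 0, max{h(S1), h(S2)} = (n−1)/2, and 0 ∉ S1·S2. -/

import Mathlib

/-- The weighted product set `S · T` of two sequences (multisets) over a commutative ring. -/
def wProd {G : Type*} [CommRing G] (S T : Multiset G) : Set G :=
  { g | ∃ l1 l2 : List G, (l1 : Multiset G) = S ∧ (l2 : Multiset G) = T ∧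
      (List.zipWith (· * ·) l1 l2).sum = g }

/-- `h(S)`: the maximum multiplicity of a term in the sequence `S`. -/
def maxMult {G : Type*} [DecidableEq G] (S : Multiset G) : ℕ :=
  S.toFinset.sup fun g => S.count g

/-!
Write `n = 2m + 1`; then `m` is odd and the sequence is `0^m 1^m c` with `2c = 1`. Replacing each
term `x` by the representative in `[0, n)` of `2x` turns it into the sequence `1 0^m 2^m` of
naturals, and a pairing of two copies of the sequence with weighted sum `0` into a pairing of two
copies of `1 0^m 2^m` whose sum `E` of products is divisible by `n` (the sum is multiplied by the
unit `4`). Now `2E ≤ ∑ a² + ∑ b² = 2(4m + 1) < 2 · 2n`, and `E ≠ 0` since the `m + 1` nonzero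
terms on either side cannot all meet zeros among `2m + 1` pairs. Hence `E = n` is odd, so the two
`1`s are paired together and every other product is a multiple of `4`: `n ≡ 1 (mod 4)`, whereas
`n ≡ 3 (mod 4)`.
-/

open Multiset

theorem sum_map_fst_add_snd {α β M : Type*} [AddCommMonoid M] (z : Multiset (α × β))
    (f : α → M) (g : β → M) :
    (z.map fun p => f p.1 + g p.2).sum =
      ((z.map Prod.fst).map f).sum + ((z.map Prod.snd).map g).sum := by
  simp only [sum_map_add, map_map, Function.comp_def]

theorem two_mul_sum_map_mul_le (z : Multiset (ℕ × ℕ)) :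
    2 * (z.map fun p => p.1 * p.2).sum ≤
      ((z.map Prod.fst).map (· ^ 2)).sum + ((z.map Prod.snd).map (· ^ 2)).sum := by
  rw [← sum_map_fst_add_snd, ← sum_map_mul_left]
  exact sum_map_le_sum_map _ _ fun p _ => by simpa only [mul_assoc] using two_mul_le_add_sq p.1 p.2

theorem exists_mul_ne_zero_of_card_lt {M₀ : Type*} [MulZeroClass M₀] [NoZeroDivisors M₀]
    [DecidableEq M₀] (z : Multiset (M₀ × M₀))
    (h : card z < (z.map Prod.fst).countP (· ≠ 0) + (z.map Prod.snd).countP (· ≠ 0)) :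
    ∃ p ∈ z, p.1 * p.2 ≠ 0 := by
  by_contra! hz
  have hboth : z.filter (fun p => p.1 ≠ 0 ∧ p.2 ≠ 0) = 0 :=
    filter_eq_nil.2 fun p hp h' => mul_ne_zero h'.1 h'.2 (hz p hp)
  rw [countP_map, countP_map, ← card_add, filter_add_filter, hboth, add_zero] at h
  exact (card_le_card (filter_le _ z)).not_gt h

theorem eq_one_of_odd_of_mem_cons {a : ℕ} {A : Multiset ℕ} (hA : ∀ x ∈ A, 2 ∣ x)
    (ha : a ∈ 1 ::ₘ A) (hodd : Odd a) : a = 1 :=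
  (mem_cons.1 ha).resolve_right fun h => Nat.not_even_iff_odd.2 hodd (even_iff_two_dvd.2 (hA a h))

theorem sum_map_mul_mod_four_of_odd {z : Multiset (ℕ × ℕ)} {A B : Multiset ℕ}
    (hA : ∀ a ∈ A, 2 ∣ a) (hB : ∀ b ∈ B, 2 ∣ b)
    (h₁ : z.map Prod.fst = 1 ::ₘ A) (h₂ : z.map Prod.snd = 1 ::ₘ B)
    (hodd : Odd (z.map fun p => p.1 * p.2).sum) : (z.map fun p => p.1 * p.2).sum % 4 = 1 := by
  obtain ⟨p, hp, hp_odd⟩ : ∃ p ∈ z, Odd (p.1 * p.2) := by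
    by_contra! h
    refine Nat.not_even_iff_odd.2 hodd (even_iff_two_dvd.2 (dvd_sum ?_))
    simp only [mem_map]
    rintro _ ⟨q, hq, rfl⟩
    exact even_iff_two_dvd.1 (Nat.not_odd_iff_even.1 (h q hq))
  obtain ⟨hp₁, hp₂⟩ := Nat.odd_mul.1 hp_odd
  have e₁ := eq_one_of_odd_of_mem_cons hA (h₁ ▸ mem_map_of_mem Prod.fst hp) hp₁
  have e₂ := eq_one_of_odd_of_mem_cons hB (h₂ ▸ mem_map_of_mem Prod.snd hp) hp₂
  obtain ⟨z', rfl⟩ := exists_cons_of_mem hp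
  rw [map_cons, e₁, cons_inj_right] at h₁
  rw [map_cons, e₂, cons_inj_right] at h₂
  have h4 : 4 ∣ (z'.map fun p => p.1 * p.2).sum := by
    refine dvd_sum ?_
    simp only [mem_map]
    rintro _ ⟨q, hq, rfl⟩
    exact mul_dvd_mul (hA _ (h₁ ▸ mem_map_of_mem _ hq)) (hB _ (h₂ ▸ mem_map_of_mem _ hq))
  rw [map_cons, sum_cons, e₁, e₂]
  omega

theorem not_dvd_sum_map_mul {m : ℕ} (hm : Odd m) {z : Multiset (ℕ × ℕ)}
    (h₁ : z.map Prod.fst = 1 ::ₘ (replicate m 0 + replicate m 2))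
    (h₂ : z.map Prod.snd = 1 ::ₘ (replicate m 0 + replicate m 2)) :
    ¬ 2 * m + 1 ∣ (z.map fun p => p.1 * p.2).sum := by
  have hevens : ∀ a ∈ replicate m 0 + replicate m 2, 2 ∣ a := by
    simp only [mem_add, mem_replicate]
    rintro a (⟨-, rfl⟩ | ⟨-, rfl⟩) <;> norm_num
  have hle : (z.map fun p => p.1 * p.2).sum ≤ 4 * m + 1 := by
    have := two_mul_sum_map_mul_le z
    simp only [h₁, h₂, map_cons, map_add, map_replicate, sum_cons, sum_add, sum_replicate,
      smul_eq_mul] at this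
    omega
  have hne : (z.map fun p => p.1 * p.2).sum ≠ 0 := by
    have hcard : card z = 2 * m + 1 := by
      rw [← card_map Prod.fst, h₁]
      simp only [card_cons, card_add, card_replicate]
      ring
    have hnonzero : (1 ::ₘ (replicate m 0 + replicate m 2)).countP (· ≠ 0) = m + 1 := by
      simp [← coe_replicate, List.countP_replicate]
    obtain ⟨p, hp, hp0⟩ := exists_mul_ne_zero_of_card_lt z (by rw [h₁, h₂, hnonzero, hcard]; omega)
    rw [Ne, sum_eq_zero_iff]
    exact fun h => hp0 (h _ (mem_map_of_mem _ hp))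
  rintro ⟨k, hk⟩
  have hE : (z.map fun p => p.1 * p.2).sum = 2 * m + 1 := by
    rcases k with _ | _ | k
    · omega
    · rw [hk]; ring
    · nlinarith
  have h4 := sum_map_mul_mod_four_of_odd hevens hevens h₁ h₂ (hE ▸ odd_two_mul_add_one m)
  rw [hE] at h4
  obtain ⟨j, rfl⟩ := hm
  omega

theorem exists_pairing_of_mem_wProd {G : Type*} [CommRing G] {S T : Multiset G} {g : G}
    (hcard : card S = card T) (hg : g ∈ wProd S T) :
    ∃ z : Multiset (G × G), z.map Prod.fst = S ∧ z.map Prod.snd = T ∧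
      (z.map fun p => p.1 * p.2).sum = g := by
  obtain ⟨l₁, l₂, rfl, rfl, rfl⟩ := hg
  have hlen : l₁.length = l₂.length := by simpa using hcard
  refine ⟨(l₁.zip l₂ : List (G × G)), ?_, ?_, ?_⟩
  · rw [map_coe, List.map_fst_zip hlen.le]
  · rw [map_coe, List.map_snd_zip hlen.ge]
  · rw [map_coe, List.map_zip_eq_zipWith, sum_coe]
    rfl

theorem natCast_sum_map_val_two_mul {n : ℕ} [NeZero n] (z : Multiset (ZMod n × ZMod n)) :
    (((z.map fun p => (2 * p.1).val * (2 * p.2).val).sum : ℕ) : ZMod n) =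
      4 * (z.map fun p => p.1 * p.2).sum := by
  rw [Nat.cast_multiset_sum, map_map, ← sum_map_mul_left]
  congr 1
  refine map_congr rfl fun p _ => ?_
  simp only [Function.comp_apply, Nat.cast_mul, ZMod.natCast_zmod_val]
  ring

theorem maxMult_eq_of_count_le {G : Type*} [DecidableEq G] {S : Multiset G} {k : ℕ} {a : G}
    (hle : ∀ g, S.count g ≤ k) (ha : S.count a = k) (hk : 0 < k) : maxMult S = k :=
  le_antisymm (Finset.sup_le fun g _ => hle g)
    (ha ▸ Finset.le_sup (f := fun g => S.count g) (mem_toFinset.2 (count_pos.1 (ha ▸ hk))))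

def extremalSeq (m : ℕ) : Multiset (ZMod (2 * m + 1)) :=
  replicate m 0 + replicate m 1 + {((m + 1 : ℕ) : ZMod (2 * m + 1))}

section extremalSeq

variable {m : ℕ}

theorem sum_extremalSeq : (extremalSeq m).sum = 0 := by
  simp only [extremalSeq, sum_add, sum_replicate, sum_singleton, smul_zero, nsmul_eq_mul, mul_one,
    zero_add]
  rw [← Nat.cast_add, show m + (m + 1) = 2 * m + 1 by ring, ZMod.natCast_self]

theorem val_two_mul_one (hm : 1 ≤ m) : (2 * (1 : ZMod (2 * m + 1))).val = 2 := by
  rw [mul_one]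
  exact ZMod.val_cast_of_lt (show 2 < 2 * m + 1 by omega)

theorem val_two_mul_natCast_succ (hm : 1 ≤ m) :
    (2 * ((m + 1 : ℕ) : ZMod (2 * m + 1))).val = 1 := by
  have h : (2 : ZMod (2 * m + 1)) * ((m + 1 : ℕ) : ZMod (2 * m + 1)) =
      ((1 + (2 * m + 1) : ℕ) : ZMod (2 * m + 1)) := by
    push_cast; ring
  rw [h, ZMod.val_natCast, Nat.add_mod_right]
  exact Nat.mod_eq_of_lt (by omega)

theorem map_val_two_mul_extremalSeq (hm : 1 ≤ m) :
    (extremalSeq m).map (fun x => (2 * x).val) = 1 ::ₘ (replicate m 0 + replicate m 2) := by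
  simp only [extremalSeq, map_add, map_replicate, map_singleton, mul_zero, ZMod.val_zero,
    val_two_mul_one hm, val_two_mul_natCast_succ hm]
  rw [add_comm, singleton_add]

theorem maxMult_extremalSeq (hm : 1 ≤ m) : maxMult (extremalSeq m) = m := by
  have hval₀ : (2 * (0 : ZMod (2 * m + 1))).val = 0 := by rw [mul_zero, ZMod.val_zero]
  have h01 : (0 : ZMod (2 * m + 1)) ≠ 1 := ne_of_apply_ne (fun x => (2 * x).val) (by
    rw [hval₀, val_two_mul_one hm]; omega)
  have h0c : (0 : ZMod (2 * m + 1)) ≠ ((m + 1 : ℕ) : ZMod (2 * m + 1)) :=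
    ne_of_apply_ne (fun x => (2 * x).val) (by
      rw [hval₀, val_two_mul_natCast_succ hm]; omega)
  have h1c : (1 : ZMod (2 * m + 1)) ≠ ((m + 1 : ℕ) : ZMod (2 * m + 1)) :=
    ne_of_apply_ne (fun x => (2 * x).val) (by
      rw [val_two_mul_one hm, val_two_mul_natCast_succ hm]; omega)
  refine maxMult_eq_of_count_le (a := 0) (fun g => ?_) ?_ (by omega)
  · simp only [extremalSeq, count_add, count_replicate, count_singleton]
    split_ifs <;> grind
  · simp only [extremalSeq, count_add, count_replicate, count_singleton, if_true, h01.symm, h0c,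
      if_false, add_zero]

theorem zero_notMem_wProd_extremalSeq (hm : Odd m) :
    0 ∉ wProd (extremalSeq m) (extremalSeq m) := by
  intro h
  obtain ⟨z, h₁, h₂, hz⟩ := exists_pairing_of_mem_wProd rfl h
  have hdouble := map_val_two_mul_extremalSeq hm.pos
  refine not_dvd_sum_map_mul hm
    (z := z.map (Prod.map (fun x => (2 * x).val) (fun x => (2 * x).val)))
    (by rw [map_map, ← hdouble, ← h₁, map_map]; rfl)
    (by rw [map_map, ← hdouble, ← h₂, map_map]; rfl) ?_
  rw [← ZMod.natCast_eq_zero_iff, map_map]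
  exact (natCast_sum_map_val_two_mul z).trans (by rw [hz, mul_zero])

end extremalSeq

theorem stmt7_general (n : ℕ) (hmod : n % 4 = 3)
    (S1 S2 : Multiset (ZMod n))
    (hS1 : S1 = Multiset.replicate ((n - 1) / 2) (0 : ZMod n) +
        Multiset.replicate ((n - 1) / 2) (1 : ZMod n) + {(((n + 1) / 2 : ℕ) : ZMod n)})
    (hS2 : S2 = S1) :
    S1.sum = 0 ∧ S2.sum = 0 ∧
    max (maxMult S1) (maxMult S2) = (n - 1) / 2 ∧
    (0 : ZMod n) ∉ wProd S1 S2 := by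
  obtain ⟨m, rfl, hm⟩ : ∃ m, n = 2 * m + 1 ∧ Odd m := ⟨n / 2, by omega, Nat.odd_iff.2 (by omega)⟩
  have hhalf : (2 * m + 1 - 1) / 2 = m := by omega
  have hhalf' : (2 * m + 1 + 1) / 2 = m + 1 := by omega
  rw [hhalf, hhalf'] at hS1
  rw [hhalf]
  obtain rfl : S1 = extremalSeq m := hS1
  subst hS2
  exact ⟨sum_extremalSeq, sum_extremalSeq, by rw [max_self, maxMult_extremalSeq hm.pos],
    zero_notMem_wProd_extremalSeq hm⟩

theorem stmt7 (n : ℕ) (hn : 3 ≤ n) (hmod : n % 4 = 3)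
    (S1 S2 : Multiset (ZMod n))
    (hS1 : S1 = Multiset.replicate ((n - 1) / 2) (0 : ZMod n) +
        Multiset.replicate ((n - 1) / 2) (1 : ZMod n) + {(((n + 1) / 2 : ℕ) : ZMod n)})
    (hS2 : S2 = S1) :
    S1.sum = 0 ∧ S2.sum = 0 ∧
    max (maxMult S1) (maxMult S2) = (n - 1) / 2 ∧
    (0 : ZMod n) ∉ wProd S1 S2 :=
  stmt7_general n hmod S1 S2 hS1 hS2
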